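/- The group of units of GR(R,r) has order 8^r (2^r - 1), and it is the direct product of a cyclic group of order 2^r - 1 (the nonzero Teichmüller elements) and an abelian group of order 8^r consisting of the elements 1 + 2a_1 + u a_2 + 2u a_3 with a_1, a_2, a_3 Teichmüller representatives. -/

import Mathlib

/-!
Reduction modulo `M = (2, u)` maps `S = GR(R, r)` onto `F = 𝔽_{2^r}`. Every `m ∈ M` has `m² = 0`,
so elements outside `M` are units and, as `4 = 0`, `(1 + m)⁴ = 1`. Hence every unit satisfies
`x ^ (4 (2^r - 1)) = 1`, and since `4` and `2^r - 1` are coprime, `Sˣ` is the direct product of its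
`(2^r - 1)`-torsion and its `4`-torsion. The `4`-torsion is `1 + M`, because its image in the group
`Fˣ` of odd order is trivial, so it has `|S| / |F| = 8^r` elements; the `(2^r - 1)`-torsion, i.e.
the nonzero Teichmüller elements, maps isomorphically onto the cyclic group `Fˣ`. Finally, lifting
the coefficients of `m = 2b₁ + ub₂ ∈ M` to Teichmüller representatives, twice, writes `m` as
`2a₁ + ua₂ + 2ua₃`.
-/
set_option maxSynthPendingDepth 3
set_option synthInstance.maxHeartbeats 400000

open DualNumber TrivSqZeroExt Polynomial

/-- The ring `R = ℤ₄[u]/(u²)`, realized as dual numbers over `ℤ₄`. -/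
abbrev R4 := DualNumber (ZMod 4)

/-- Reduction `R → R/(2,u) ≅ 𝔽₂` modulo the maximal ideal `(2,u)`. -/
noncomputable def res : R4 →+* ZMod 2 :=
  (ZMod.castHom (show 2 ∣ 4 by norm_num) (ZMod 2)).comp
    (fstHom (ZMod 4) (ZMod 4) (ZMod 4)).toRingHom

/-- The image of `u` in the Galois extension `GR(R,r) = R[x]/(f)`. -/
noncomputable def uGR (f : Polynomial R4) : Polynomial R4 ⧸ Ideal.span {f} :=
  Ideal.Quotient.mk (Ideal.span {f}) (C eps)

section CoprimeExponent

variable {G : Type*} [CommGroup G] {m n : ℕ}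

theorem bijective_coprod_ker_pow (hmn : m.Coprime n) (hG : ∀ x : G, x ^ (m * n) = 1) :
    Function.Bijective
      ((powMonoidHom m : G →* G).ker.subtype.coprod (powMonoidHom n : G →* G).ker.subtype) := by
  refine ⟨(injective_iff_map_eq_one _).mpr ?_, fun x => ?_⟩
  · rintro ⟨⟨a, ha : a ^ m = 1⟩, ⟨b, hb : b ^ n = 1⟩⟩ (hab : a * b = 1)
    obtain rfl : a = 1 := (pow_eq_one_iff_of_coprime hmn).mp
      ⟨ha, by rw [eq_inv_of_mul_eq_one_left hab, inv_pow, hb, inv_one]⟩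
    obtain rfl : b = 1 := by rwa [one_mul] at hab
    rfl
  · obtain ⟨u, v, huv⟩ := Nat.isCoprime_iff_coprime.mpr hmn
    have hG' : ∀ k : ℤ, (x ^ k) ^ (m * n) = 1 := fun k => by
      rw [← zpow_natCast, ← zpow_mul, mul_comm, zpow_mul, zpow_natCast, hG, one_zpow]
    refine ⟨⟨⟨x ^ (v * n), ?_⟩, ⟨x ^ (u * m), ?_⟩⟩, ?_⟩
    · show (x ^ (v * n)) ^ m = 1
      rw [← zpow_natCast, ← zpow_mul, show v * n * m = v * ((m * n : ℕ) : ℤ) by push_cast; ring,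
        zpow_mul, zpow_natCast, hG']
    · show (x ^ (u * m)) ^ n = 1
      rw [← zpow_natCast, ← zpow_mul, show u * m * n = u * ((m * n : ℕ) : ℤ) by push_cast; ring,
        zpow_mul, zpow_natCast, hG']
    · show x ^ (v * n) * x ^ (u * m) = x
      rw [← zpow_add, show v * n + u * m = (1 : ℤ) by linear_combination huv, zpow_one]

noncomputable def kerPowProdEquiv (hmn : m.Coprime n) (hG : ∀ x : G, x ^ (m * n) = 1) :
    (powMonoidHom m : G →* G).ker × (powMonoidHom n : G →* G).ker ≃* G :=
  MulEquiv.ofBijective _ (bijective_coprod_ker_pow hmn hG)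

end CoprimeExponent

namespace AdjoinRoot

variable {R K : Type*} [CommRing R] [CommRing K] {φ : R →+* K}

theorem map_comp_mk (φ : R →+* K) (f : R[X]) :
    (map φ f (f.map φ) dvd_rfl).comp (mk f) = (mk (f.map φ)).comp (mapRingHom φ) :=
  Polynomial.ringHom_ext (fun _ => by simp) (by simp)

theorem map_surjective_of_surjective (hφ : Function.Surjective φ) (f : R[X]) :
    Function.Surjective (map φ f (f.map φ) dvd_rfl) := by
  intro y
  obtain ⟨q, rfl⟩ := mk_surjective y
  obtain ⟨p, rfl⟩ := Polynomial.map_surjective φ hφ q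
  exact ⟨mk f p, RingHom.congr_fun (map_comp_mk φ f) p⟩

theorem ker_map_of_surjective (hφ : Function.Surjective φ) (f : R[X]) :
    RingHom.ker (map φ f (f.map φ) dvd_rfl) = (RingHom.ker φ).map (of f) := by
  have hker (g : K[X]) : RingHom.ker (mk g) = Ideal.span {g} := Ideal.mk_ker
  have hspan : Ideal.span {f.map φ} = (Ideal.span {f}).map (mapRingHom φ) := by
    rw [Ideal.map_span, Set.image_singleton, coe_mapRingHom]
  have hbot : (Ideal.span {f}).map (mk f) = ⊥ := by
    rw [Ideal.map_eq_bot_iff_le_ker]; exact Ideal.mk_ker.ge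
  rw [← Ideal.map_comap_of_surjective (mk f) mk_surjective (RingHom.ker _), RingHom.comap_ker,
    map_comp_mk, ← RingHom.comap_ker, hker, hspan,
    Ideal.comap_map_of_surjective _ (Polynomial.map_surjective φ hφ), ← RingHom.ker_eq_comap_bot,
    Polynomial.ker_mapRingHom, Ideal.map_sup, hbot, bot_sup_eq, Ideal.map_map]
  rfl

theorem natCard_eq_pow_natDegree {f : R[X]} (hf : f.Monic) :
    Nat.card (AdjoinRoot f) = Nat.card R ^ f.natDegree := by
  rw [Nat.card_congr (powerBasis' hf).basis.equivFun.toEquiv, Nat.card_fun, Nat.card_fin,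
    powerBasis'_dim]

end AdjoinRoot

section ResidueField

variable {S F : Type*} [CommRing S] [Field F] {π : S →+* F}

theorem isUnit_of_map_ne_zero (hπ : Function.Surjective π)
    (hnil : ∀ m ∈ RingHom.ker π, IsNilpotent m) {x : S} (hx : π x ≠ 0) : IsUnit x := by
  obtain ⟨y, hy⟩ := hπ (π x)⁻¹
  have hm : x * y - 1 ∈ RingHom.ker π := by
    rw [RingHom.mem_ker, map_sub, map_mul, hy, mul_inv_cancel₀ hx, map_one, sub_self]
  have hxy : IsUnit (x * y) := by simpa using (hnil _ hm).isUnit_one_add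
  exact isUnit_of_mul_isUnit_left hxy

theorem units_map_surjective (hπ : Function.Surjective π)
    (hnil : ∀ m ∈ RingHom.ker π, IsNilpotent m) : Function.Surjective (Units.map (π : S →* F)) := by
  intro y
  obtain ⟨x, hx⟩ := hπ y
  obtain ⟨u, rfl⟩ := isUnit_of_map_ne_zero hπ hnil (hx ▸ y.ne_zero)
  exact ⟨u, Units.ext hx⟩

theorem one_add_pow_four_eq_one (h4 : (4 : S) = 0) {m : S} (hm : m * m = 0) : (1 + m) ^ 4 = 1 := by
  linear_combination m * h4 + (6 + 4 * m + m ^ 2) * hm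

/-- Abstracts reduction `GR(R, r) → GR(R, r)/(2, u) ≅ 𝔽_{2^r}`. -/
structure IsSquareZeroReduction (π : S →+* F) : Prop where
  surjective : Function.Surjective π
  mul_self_eq_zero : ∀ m ∈ RingHom.ker π, m * m = 0
  four_eq_zero : (4 : S) = 0
  odd_card_units : Odd (Nat.card Fˣ)

namespace IsSquareZeroReduction

theorem isNilpotent_of_mem_ker (h : IsSquareZeroReduction π) {m : S} (hm : m ∈ RingHom.ker π) :
    IsNilpotent m :=
  ⟨2, by rw [sq, h.mul_self_eq_zero m hm]⟩

theorem coprime_card_units_four (h : IsSquareZeroReduction π) : (Nat.card Fˣ).Coprime 4 :=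
  (Nat.coprime_two_right.mpr h.odd_card_units).pow_right 2

theorem pow_four_eq_one_iff (h : IsSquareZeroReduction π) (x : Sˣ) :
    x ^ 4 = 1 ↔ Units.map (π : S →* F) x = 1 := by
  refine ⟨fun hx => (pow_eq_one_iff_of_coprime h.coprime_card_units_four).mp
    ⟨pow_card_eq_one', by rw [← map_pow, hx, map_one]⟩, fun hx => ?_⟩
  have hm : (x : S) - 1 ∈ RingHom.ker π := by
    rw [RingHom.sub_mem_ker_iff, map_one]
    exact Units.ext_iff.mp hx
  ext
  rw [Units.val_pow_eq_pow_val, Units.val_one, ← add_sub_cancel (1 : S) x,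
    one_add_pow_four_eq_one h.four_eq_zero (h.mul_self_eq_zero _ hm)]

theorem pow_four_eq_one_iff_sub_one_mem_ker (h : IsSquareZeroReduction π) (x : Sˣ) :
    x ^ 4 = 1 ↔ (x : S) - 1 ∈ RingHom.ker π := by
  rw [h.pow_four_eq_one_iff, RingHom.sub_mem_ker_iff, map_one, Units.ext_iff, Units.coe_map,
    Units.val_one]
  rfl

theorem pow_card_units_mul_four_eq_one (h : IsSquareZeroReduction π) (x : Sˣ) :
    x ^ (Nat.card Fˣ * 4) = 1 := by
  rw [pow_mul, h.pow_four_eq_one_iff, map_pow, pow_card_eq_one']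

noncomputable def unitsEquiv (h : IsSquareZeroReduction π) :
    (powMonoidHom (Nat.card Fˣ) : Sˣ →* Sˣ).ker × (powMonoidHom 4 : Sˣ →* Sˣ).ker ≃* Sˣ :=
  kerPowProdEquiv h.coprime_card_units_four h.pow_card_units_mul_four_eq_one

theorem unitsEquiv_apply (h : IsSquareZeroReduction π) (c a) : h.unitsEquiv (c, a) = c * a := rfl

theorem bijective_units_map_comp_subtype (h : IsSquareZeroReduction π) :
    Function.Bijective ((Units.map (π : S →* F)).comp
      (powMonoidHom (Nat.card Fˣ) : Sˣ →* Sˣ).ker.subtype) := by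
  refine ⟨(injective_iff_map_eq_one _).mpr ?_, fun y => ?_⟩
  · rintro ⟨x, hx : x ^ Nat.card Fˣ = 1⟩ hπx
    exact Subtype.ext ((pow_eq_one_iff_of_coprime h.coprime_card_units_four).mp
      ⟨hx, (h.pow_four_eq_one_iff x).mpr hπx⟩)
  · obtain ⟨x, rfl⟩ := units_map_surjective h.surjective (fun _ => h.isNilpotent_of_mem_ker) y
    obtain ⟨⟨c, ⟨a, ha⟩⟩, rfl⟩ := h.unitsEquiv.surjective x
    refine ⟨c, ?_⟩
    rw [unitsEquiv_apply, map_mul, (h.pow_four_eq_one_iff a).mp ha, mul_one]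
    rfl

noncomputable def kerPowCardEquivUnits (h : IsSquareZeroReduction π) :
    (powMonoidHom (Nat.card Fˣ) : Sˣ →* Sˣ).ker ≃* Fˣ :=
  MulEquiv.ofBijective _ h.bijective_units_map_comp_subtype

def kerPowFourEquivKer (h : IsSquareZeroReduction π) :
    (powMonoidHom 4 : Sˣ →* Sˣ).ker ≃ RingHom.ker π where
  toFun x := ⟨(x : Sˣ) - 1, (h.pow_four_eq_one_iff_sub_one_mem_ker x).mp x.2⟩
  invFun m := ⟨Units.mkOfMulEqOne (1 + m) (1 - m) (by
      linear_combination -h.mul_self_eq_zero m m.2), by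
    rw [MonoidHom.mem_ker, powMonoidHom_apply, h.pow_four_eq_one_iff_sub_one_mem_ker]
    simp⟩
  left_inv x := by ext; simp
  right_inv m := by ext; simp

theorem exists_pow_eq_self_sub_mem_ker (h : IsSquareZeroReduction π) (s : S) :
    ∃ a : S, a ^ (Nat.card Fˣ + 1) = a ∧ s - a ∈ RingHom.ker π := by
  by_cases hs : π s = 0
  · exact ⟨0, zero_pow (Nat.succ_ne_zero _), by rwa [sub_zero, RingHom.mem_ker]⟩
  obtain ⟨u, rfl⟩ := isUnit_of_map_ne_zero h.surjective (fun _ => h.isNilpotent_of_mem_ker) hs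
  obtain ⟨⟨⟨c, hc : c ^ Nat.card Fˣ = 1⟩, ⟨a, ha⟩⟩, rfl⟩ := h.unitsEquiv.surjective u
  refine ⟨c, by rw [pow_succ, ← Units.val_pow_eq_pow_val, hc, Units.val_one, one_mul], ?_⟩
  have hm := Ideal.mul_mem_left _ (c : S) ((h.pow_four_eq_one_iff_sub_one_mem_ker a).mp ha)
  rwa [unitsEquiv_apply, Units.val_mul, ← mul_sub_one]

theorem isCyclic_ker_powMonoidHom_card [Finite F] (h : IsSquareZeroReduction π) :
    IsCyclic (powMonoidHom (Nat.card Fˣ) : Sˣ →* Sˣ).ker :=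
  (MulEquiv.isCyclic h.kerPowCardEquivUnits).mpr inferInstance

theorem natCard_ker_powMonoidHom_card (h : IsSquareZeroReduction π) :
    Nat.card (powMonoidHom (Nat.card Fˣ) : Sˣ →* Sˣ).ker = Nat.card Fˣ :=
  Nat.card_congr h.kerPowCardEquivUnits.toEquiv

theorem natCard_ker_powMonoidHom_four (h : IsSquareZeroReduction π) :
    Nat.card (powMonoidHom 4 : Sˣ →* Sˣ).ker = Nat.card (RingHom.ker π) :=
  Nat.card_congr h.kerPowFourEquivKer

theorem natCard_units (h : IsSquareZeroReduction π) :
    Nat.card Sˣ = Nat.card (RingHom.ker π) * Nat.card Fˣ := by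
  rw [← Nat.card_congr h.unitsEquiv.toEquiv, Nat.card_prod, h.natCard_ker_powMonoidHom_card,
    h.natCard_ker_powMonoidHom_four, mul_comm]

end IsSquareZeroReduction

end ResidueField

section SpanPair

variable {S : Type*} [CommRing S] {α β : S}

theorem mul_self_eq_zero_of_mem_span_pair (hα : α * α = 0) (hβ : β * β = 0) (hαβ : 2 * α * β = 0)
    {m : S} (hm : m ∈ Ideal.span {α, β}) : m * m = 0 := by
  obtain ⟨a, b, rfl⟩ := Ideal.mem_span_pair.mp hm
  linear_combination a ^ 2 * hα + b ^ 2 * hβ + a * b * hαβ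

theorem mem_span_pair_iff_exists (hα : α * α = 0) (hβ : β * β = 0) {P : S → Prop}
    (hP : ∀ s, ∃ a, P a ∧ s - a ∈ Ideal.span {α, β}) {m : S} :
    m ∈ Ideal.span {α, β} ↔
      ∃ a₁ a₂ a₃, P a₁ ∧ P a₂ ∧ P a₃ ∧ m = α * a₁ + β * a₂ + α * β * a₃ := by
  constructor
  · intro hm
    obtain ⟨b₁, b₂, rfl⟩ := Ideal.mem_span_pair.mp hm
    obtain ⟨a₁, hP₁, h₁⟩ := hP b₁
    obtain ⟨a₂, hP₂, h₂⟩ := hP b₂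
    obtain ⟨c₁, d₁, h₁⟩ := Ideal.mem_span_pair.mp h₁
    obtain ⟨c₂, d₂, h₂⟩ := Ideal.mem_span_pair.mp h₂
    obtain ⟨a₃, hP₃, h₃⟩ := hP (d₁ + c₂)
    obtain ⟨c₃, d₃, h₃⟩ := Ideal.mem_span_pair.mp h₃
    refine ⟨a₁, a₂, a₃, hP₁, hP₂, hP₃, ?_⟩
    -- `α (b₁ - a₁)` and `β (b₂ - a₂)` are `αβ (d₁ + c₂)` modulo `α², β²`, so lift `d₁ + c₂` too
    linear_combination (-α) * h₁ - β * h₂ - α * β * h₃ + (c₁ + β * c₃) * hα + (d₂ + α * d₃) * hβ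
  · rintro ⟨a₁, a₂, a₃, -, -, -, rfl⟩
    rw [Ideal.mem_span_pair]
    exact ⟨a₁ + β * a₃, a₂, by ring⟩

end SpanPair

namespace TrivSqZeroExt

variable {R M : Type*} [AddMonoidWithOne R] [AddMonoid M]

@[simp]
theorem fst_ofNat (n : ℕ) [n.AtLeastTwo] : (ofNat(n) : TrivSqZeroExt R M).fst = ofNat(n) :=
  fst_natCast n

@[simp]
theorem snd_ofNat (n : ℕ) [n.AtLeastTwo] : (ofNat(n) : TrivSqZeroExt R M).snd = 0 :=
  snd_natCast n

end TrivSqZeroExt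

theorem natCard_R4 : Nat.card R4 = 16 := by
  show Nat.card (ZMod 4 × ZMod 4) = 16
  rw [Nat.card_prod, Nat.card_zmod]

theorem res_apply (x : R4) : res x = ZMod.castHom (show 2 ∣ 4 by norm_num) (ZMod 2) x.fst := rfl

theorem res_surjective : Function.Surjective res := fun y =>
  ⟨inl (y.val : ZMod 4), by rw [res_apply, fst_inl]; revert y; decide⟩

theorem two_mul_two_R4 : (2 : R4) * 2 = 0 := by
  ext
  · rw [fst_mul, fst_ofNat, fst_zero]; decide
  · simp

theorem ker_res : RingHom.ker res = Ideal.span {2, eps} := by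
  ext x
  rw [RingHom.mem_ker, res_apply, Ideal.mem_span_pair]
  constructor
  · intro hx
    obtain ⟨b, hb⟩ : ∃ b : ZMod 4, x.fst = b * 2 := by
      revert hx; generalize x.fst = a; revert a; decide
    refine ⟨inl b, inl x.snd, ?_⟩
    ext <;> simp [hb]
  · rintro ⟨a, b, rfl⟩
    simpa using Or.inr (by decide)

theorem natCard_eq_natCard_ker_mul {S F : Type*} [CommRing S] [CommRing F] {π : S →+* F}
    (hπ : Function.Surjective π) : Nat.card S = Nat.card (RingHom.ker π) * Nat.card F := by
  rw [Submodule.card_eq_card_quotient_mul_card (RingHom.ker π),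
    Nat.card_congr (RingHom.quotientKerEquivOfSurjective hπ).toEquiv]

theorem Units.mem_ker_powMonoidHom_iff {M : Type*} [CommMonoid M] {n : ℕ} (x : Mˣ) :
    x ∈ (powMonoidHom n : Mˣ →* Mˣ).ker ↔ (x : M) ^ (n + 1) = x := by
  rw [pow_succ, x.isUnit.mul_eq_right, ← Units.val_pow_eq_pow_val, Units.val_eq_one,
    MonoidHom.mem_ker, powMonoidHom_apply]

section GaloisRing

variable {f : R4[X]}

theorem ker_map_res : RingHom.ker (AdjoinRoot.map res f (f.map res) dvd_rfl) =
    Ideal.span {2, AdjoinRoot.of f eps} := by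
  rw [AdjoinRoot.ker_map_of_surjective res_surjective, ker_res, Ideal.map_span, Set.image_pair,
    map_ofNat]

theorem two_mul_two_adjoinRoot : (2 : AdjoinRoot f) * 2 = 0 := by
  rw [← map_ofNat (AdjoinRoot.of f) 2, ← map_mul, two_mul_two_R4, map_zero]

theorem of_eps_mul_self : AdjoinRoot.of f eps * AdjoinRoot.of f eps = 0 := by
  rw [← map_mul, eps_mul_eps, map_zero]

theorem natCard_units_residueField (hmonic : f.Monic) [Fact (Irreducible (f.map res))] :
    Nat.card (AdjoinRoot (f.map res))ˣ = 2 ^ f.natDegree - 1 := by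
  rw [Nat.card_units, AdjoinRoot.natCard_eq_pow_natDegree (hmonic.map res), Nat.card_zmod,
    hmonic.natDegree_map]

theorem natCard_ker_map_res (hmonic : f.Monic) :
    Nat.card (RingHom.ker (AdjoinRoot.map res f (f.map res) dvd_rfl)) = 8 ^ f.natDegree := by
  have := natCard_eq_natCard_ker_mul (AdjoinRoot.map_surjective_of_surjective res_surjective f)
  rw [AdjoinRoot.natCard_eq_pow_natDegree hmonic,
    AdjoinRoot.natCard_eq_pow_natDegree (hmonic.map res), natCard_R4, Nat.card_zmod,
    hmonic.natDegree_map, show 16 = 8 * 2 by rfl, mul_pow] at this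
  exact Nat.eq_of_mul_eq_mul_right (by positivity) this.symm

theorem finite_residueField (hmonic : f.Monic) : Finite (AdjoinRoot (f.map res)) :=
  Nat.finite_of_card_ne_zero <| by
    rw [AdjoinRoot.natCard_eq_pow_natDegree (hmonic.map res), Nat.card_zmod]; positivity

theorem two_pow_natDegree_eq (hmonic : f.Monic) [Fact (Irreducible (f.map res))] :
    2 ^ f.natDegree = Nat.card (AdjoinRoot (f.map res))ˣ + 1 := by
  rw [natCard_units_residueField hmonic]
  have := Nat.one_le_two_pow (n := f.natDegree)
  omega

theorem isSquareZeroReduction_map_res (hmonic : f.Monic) [Fact (Irreducible (f.map res))]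
    (hr : 1 ≤ f.natDegree) :
    IsSquareZeroReduction (AdjoinRoot.map res f (f.map res) dvd_rfl) where
  surjective := AdjoinRoot.map_surjective_of_surjective res_surjective f
  mul_self_eq_zero m hm := by
    rw [ker_map_res] at hm
    refine mul_self_eq_zero_of_mem_span_pair two_mul_two_adjoinRoot of_eps_mul_self ?_ hm
    rw [two_mul_two_adjoinRoot, zero_mul]
  four_eq_zero := by rw [← two_mul_two_adjoinRoot]; norm_num
  odd_card_units := by
    rw [natCard_units_residueField hmonic]
    exact Nat.Even.sub_odd Nat.one_le_two_pow ((Nat.even_pow' (by omega)).mpr even_two) odd_one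

theorem mem_ker_powMonoidHom_card_iff (hmonic : f.Monic) [Fact (Irreducible (f.map res))]
    (x : (AdjoinRoot f)ˣ) :
    x ∈ (powMonoidHom (Nat.card (AdjoinRoot (f.map res))ˣ) :
        (AdjoinRoot f)ˣ →* (AdjoinRoot f)ˣ).ker ↔
      (x : AdjoinRoot f) ^ 2 ^ f.natDegree = x := by
  rw [Units.mem_ker_powMonoidHom_iff, two_pow_natDegree_eq hmonic]

theorem mem_ker_powMonoidHom_four_iff (hmonic : f.Monic) [Fact (Irreducible (f.map res))]
    (hr : 1 ≤ f.natDegree) (x : (AdjoinRoot f)ˣ) :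
    x ∈ (powMonoidHom 4 : (AdjoinRoot f)ˣ →* (AdjoinRoot f)ˣ).ker ↔
      ∃ a₁ a₂ a₃ : AdjoinRoot f, a₁ ^ 2 ^ f.natDegree = a₁ ∧ a₂ ^ 2 ^ f.natDegree = a₂ ∧
        a₃ ^ 2 ^ f.natDegree = a₃ ∧
        (x : AdjoinRoot f) =
          1 + 2 * a₁ + AdjoinRoot.of f eps * a₂ + 2 * AdjoinRoot.of f eps * a₃ := by
  have h := isSquareZeroReduction_map_res hmonic hr
  have hteich (s : AdjoinRoot f) :
      ∃ a, a ^ 2 ^ f.natDegree = a ∧ s - a ∈ Ideal.span {2, AdjoinRoot.of f eps} := by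
    rw [two_pow_natDegree_eq hmonic, ← ker_map_res]
    exact h.exists_pow_eq_self_sub_mem_ker s
  rw [MonoidHom.mem_ker, powMonoidHom_apply, h.pow_four_eq_one_iff_sub_one_mem_ker, ker_map_res,
    mem_span_pair_iff_exists two_mul_two_adjoinRoot of_eps_mul_self hteich]
  simp only [sub_eq_iff_eq_add', add_assoc]

end GaloisRing

theorem stmt9 (r : ℕ) (hr : 1 ≤ r) (f : Polynomial R4) (hmonic : f.Monic)
    (hirr : Irreducible (f.map res)) (hdeg : f.natDegree = r) :
    Nat.card (Polynomial R4 ⧸ Ideal.span {f})ˣ = 8 ^ r * (2 ^ r - 1) ∧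
    ∃ GC GA : Subgroup (Polynomial R4 ⧸ Ideal.span {f})ˣ,
      IsCyclic GC ∧ Nat.card GC = 2 ^ r - 1 ∧ Nat.card GA = 8 ^ r ∧
      Nonempty ((Polynomial R4 ⧸ Ideal.span {f})ˣ ≃* GC × GA) ∧
      (∀ x : (Polynomial R4 ⧸ Ideal.span {f})ˣ,
        x ∈ GC ↔ (x : Polynomial R4 ⧸ Ideal.span {f}) ^ 2 ^ r = (x : Polynomial R4 ⧸ Ideal.span {f})) ∧
      (∀ x : (Polynomial R4 ⧸ Ideal.span {f})ˣ,
        x ∈ GA ↔ ∃ a1 a2 a3 : Polynomial R4 ⧸ Ideal.span {f},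
          a1 ^ 2 ^ r = a1 ∧ a2 ^ 2 ^ r = a2 ∧ a3 ^ 2 ^ r = a3 ∧
          (x : Polynomial R4 ⧸ Ideal.span {f}) = 1 + 2 * a1 + uGR f * a2 + 2 * (uGR f) * a3) := by
  have : Fact (Irreducible (f.map res)) := ⟨hirr⟩
  have := finite_residueField hmonic
  subst hdeg
  have h := isSquareZeroReduction_map_res hmonic hr
  have hcard := natCard_units_residueField hmonic
  have hker := natCard_ker_map_res hmonic
  -- `AdjoinRoot f` is `R4[X] ⧸ Ideal.span {f}`, and `uGR f` is `AdjoinRoot.of f eps`, by definition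
  exact ⟨h.natCard_units.trans (by rw [hcard, hker]), _, _, h.isCyclic_ker_powMonoidHom_card,
    h.natCard_ker_powMonoidHom_card.trans hcard, h.natCard_ker_powMonoidHom_four.trans hker,
    ⟨h.unitsEquiv.symm⟩, mem_ker_powMonoidHom_card_iff hmonic,
    mem_ker_powMonoidHom_four_iff hmonic hr⟩
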